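/- The functions x ↦ log Φ(x) and x ↦ log(1 - Φ(x)) are strictly concave on ℝ, where Φ is the standard normal cumulative distribution function. -/

import Mathlib

noncomputable def Phi (x : ℝ) : ℝ :=
  ∫ t in Set.Iic x, (Real.sqrt (2 * Real.pi))⁻¹ * Real.exp (-t ^ 2 / 2)

/-!
With `φ' = -x φ`, one finds `(log Φ)' = φ / Φ` and `(log Φ)'' = -φ (φ + x Φ) / Φ²`.
Integrating `t φ(t) = -φ'(t)` over `t < x` gives `φ(x) + x Φ(x) = ∫_{t<x} (x - t) φ(t) dt > 0`,
so `log Φ` is strictly concave. Since `1 - Φ(x) = Φ(-x)`, `log (1 - Φ)` is `log Φ` composed with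
`x ↦ -x`, hence strictly concave as well.
-/

open MeasureTheory ProbabilityTheory Set Real Filter Topology

lemma StrictConcaveOn.comp_neg {𝕜 E β : Type*} [Ring 𝕜] [PartialOrder 𝕜] [AddCommGroup E]
    [Module 𝕜 E] [AddCommMonoid β] [PartialOrder β] [SMul 𝕜 β] {s : Set E} {f : E → β}
    (hf : StrictConcaveOn 𝕜 s f) : StrictConcaveOn 𝕜 (-s) (fun x => f (-x)) := by
  refine ⟨hf.1.neg, fun x hx y hy hxy a b ha hb hab => ?_⟩
  simpa only [neg_add, smul_neg] using hf.2 hx hy (neg_injective.ne hxy) ha hb hab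

lemma strictConcaveOn_univ_of_hasDerivAt2_neg {f f' f'' : ℝ → ℝ}
    (hf : ∀ x, HasDerivAt f (f' x) x) (hf' : ∀ x, HasDerivAt f' (f'' x) x)
    (hf'' : ∀ x, f'' x < 0) : StrictConcaveOn ℝ univ f := by
  have hderiv : deriv f = f' := funext fun x => (hf x).deriv
  refine StrictAnti.strictConcaveOn_univ_of_deriv
    (continuous_iff_continuousAt.2 fun x => (hf x).continuousAt) ?_
  rw [hderiv]
  exact strictAnti_of_hasDerivAt_neg hf' hf''

lemma setIntegral_pos_of_forall_pos {X : Type*} [MeasurableSpace X] {μ : Measure X} {s : Set X}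
    (hs : MeasurableSet s) (hμs : μ s ≠ 0) {f : X → ℝ} (hf : ∀ x ∈ s, 0 < f x)
    (hfi : IntegrableOn f s μ) : 0 < ∫ x in s, f x ∂μ := by
  have hsupp : Function.support f ∩ s = s := inter_eq_right.2 fun x hx => (hf x hx).ne'
  rw [setIntegral_pos_iff_support_of_nonneg_ae
    (ae_restrict_of_forall_mem hs fun x hx => (hf x hx).le) hfi, hsupp]
  exact pos_iff_ne_zero.2 hμs

noncomputable def phi (x : ℝ) : ℝ := (√(2 * π))⁻¹ * exp (-x ^ 2 / 2)

lemma phi_eq_gaussianPDFReal : phi = gaussianPDFReal 0 1 := by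
  ext x
  simp [phi, gaussianPDFReal]

lemma Phi_eq_integral_phi (x : ℝ) : Phi x = ∫ t in Iic x, phi t := rfl

lemma phi_pos (x : ℝ) : 0 < phi x := by
  rw [phi_eq_gaussianPDFReal]
  exact gaussianPDFReal_pos _ _ _ one_ne_zero

lemma phi_neg (x : ℝ) : phi (-x) = phi x := by
  unfold phi
  rw [neg_sq]

lemma integrable_phi : Integrable phi := by
  rw [phi_eq_gaussianPDFReal]
  exact integrable_gaussianPDFReal _ _

lemma integral_phi : ∫ x, phi x = 1 := by
  rw [phi_eq_gaussianPDFReal]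
  exact integral_gaussianPDFReal_eq_one _ one_ne_zero

lemma continuous_phi : Continuous phi := by
  unfold phi
  fun_prop

lemma hasDerivAt_phi (x : ℝ) : HasDerivAt phi (-x * phi x) x := by
  have h := ((hasDerivAt_pow 2 x).fun_neg.div_const 2).exp.const_mul (√(2 * π))⁻¹
  refine h.congr_deriv ?_
  simp only [phi]
  ring

lemma tendsto_phi_atBot : Tendsto phi atBot (𝓝 0) := by
  have hsq : Tendsto (fun t : ℝ => t ^ 2) atBot atTop := by
    simpa only [Function.comp_def, sq_abs] using
      (tendsto_pow_atTop two_ne_zero).comp (tendsto_abs_atBot_atTop (G := ℝ))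
  have hexp := tendsto_exp_comp_nhds_zero.2
    ((tendsto_neg_atTop_atBot.comp hsq).atBot_div_const two_pos)
  have h := hexp.const_mul (√(2 * π))⁻¹
  rw [mul_zero] at h
  exact h

lemma integrable_mul_phi : Integrable fun t => t * phi t := by
  have h := (integrable_mul_exp_neg_mul_sq (by norm_num : (0 : ℝ) < 1 / 2)).const_mul
    (√(2 * π))⁻¹
  refine h.congr (Eventually.of_forall fun t => ?_)
  simp only [phi]
  ring_nf

lemma setIntegral_Iic_mul_phi (x : ℝ) : ∫ t in Iic x, t * phi t = -phi x := by
  have h := integral_Iic_of_hasDerivAt_of_tendsto (f := fun t => -phi t) (a := x) (m := 0)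
    continuous_phi.neg.continuousWithinAt
    (fun t _ => (hasDerivAt_phi t).neg.congr_deriv (by ring))
    integrable_mul_phi.integrableOn (by simpa only [neg_zero] using tendsto_phi_atBot.neg)
  rw [h, sub_zero]

lemma Phi_pos (x : ℝ) : 0 < Phi x :=
  setIntegral_pos_of_forall_pos measurableSet_Iic (by simp) (fun t _ => phi_pos t)
    integrable_phi.integrableOn

lemma Phi_neg (x : ℝ) : Phi (-x) = 1 - Phi x := by
  rw [Phi_eq_integral_phi (-x), ← integral_comp_neg_Ioi]
  simp only [phi_neg]
  rw [eq_sub_iff_add_eq', Phi_eq_integral_phi, intervalIntegral.integral_Iic_add_Ioi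
    integrable_phi.integrableOn integrable_phi.integrableOn, integral_phi]

lemma hasDerivAt_Phi (x : ℝ) : HasDerivAt Phi (phi x) x := by
  have hPhi : Phi = fun u => Phi 0 + ∫ t in (0 : ℝ)..u, phi t := by
    ext u
    rw [Phi_eq_integral_phi, Phi_eq_integral_phi, ← intervalIntegral.integral_Iic_sub_Iic
      integrable_phi.integrableOn integrable_phi.integrableOn]
    ring
  rw [hPhi]
  exact (intervalIntegral.integral_hasDerivAt_right integrable_phi.intervalIntegrable
    (continuous_phi.stronglyMeasurableAtFilter _ _) continuous_phi.continuousAt).const_add _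

lemma phi_add_mul_Phi_pos (x : ℝ) : 0 < phi x + x * Phi x := by
  have hint : Integrable fun t => (x - t) * phi t :=
    ((integrable_phi.const_mul x).sub integrable_mul_phi).congr
      (Eventually.of_forall fun t => (sub_mul x t (phi t)).symm)
  calc 0 < ∫ t in Iio x, (x - t) * phi t :=
        setIntegral_pos_of_forall_pos measurableSet_Iio (by simp)
          (fun t ht => mul_pos (sub_pos.2 ht) (phi_pos t)) hint.integrableOn
    _ = ∫ t in Iic x, (x * phi t - t * phi t) := by
        rw [integral_Iic_eq_integral_Iio]
        simp only [sub_mul]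
    _ = x * Phi x - ∫ t in Iic x, t * phi t := by
        rw [integral_sub (integrable_phi.const_mul x).integrableOn integrable_mul_phi.integrableOn,
          integral_const_mul, Phi_eq_integral_phi]
    _ = phi x + x * Phi x := by
        rw [setIntegral_Iic_mul_phi]
        ring

lemma strictConcaveOn_log_Phi : StrictConcaveOn ℝ univ fun x => log (Phi x) := by
  refine strictConcaveOn_univ_of_hasDerivAt2_neg
    (fun x => (hasDerivAt_Phi x).log (Phi_pos x).ne')
    (fun x => (hasDerivAt_phi x).div (hasDerivAt_Phi x) (Phi_pos x).ne') fun x => ?_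
  have h : -x * phi x * Phi x - phi x * phi x = -phi x * (phi x + x * Phi x) := by ring
  rw [h]
  exact div_neg_of_neg_of_pos (mul_neg_of_neg_of_pos (neg_neg_of_pos (phi_pos x))
    (phi_add_mul_Phi_pos x)) (pow_pos (Phi_pos x) 2)

theorem stmt11 :
    StrictConcaveOn ℝ Set.univ (fun x : ℝ => Real.log (Phi x)) ∧
    StrictConcaveOn ℝ Set.univ (fun x : ℝ => Real.log (1 - Phi x)) := by
  refine ⟨strictConcaveOn_log_Phi, ?_⟩
  simpa only [← Phi_neg, neg_univ] using strictConcaveOn_log_Phi.comp_neg
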